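/- arXiv:2107.02163 — 8 statements merged into one kernel-verified Lean document; each statement's English description precedes it below -/
import Mathlib

section
/- Collision preservation for perfect randomized encodings (Lemma 2.8): Suppose f̂ satisfies perfect privacy and unique randomness. Then for all x₁, x₂ ∈ X with f(x₁) = f(x₂) and for every r₁ ∈ R, there exists a unique r₂ ∈ R such that f̂(x₁, r₁) = f̂(x₂, r₂). -/
/-- Collision preservation for perfect randomized encodings (Lemma 2.8):
if `f̂` satisfies perfect privacy and unique randomness, then whenever
`f x₁ = f x₂`, for every `r₁` there is a unique `r₂` with
`f̂ (x₁, r₁) = f̂ (x₂, r₂)`. -/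
theorem collision_preservation
    {X R Y S : Type*} [Fintype X] [Fintype R] [Fintype Y] [Fintype S]
    [Nonempty X] [Nonempty R] [Nonempty Y] [Nonempty S]
    (f : X → Y) (fhat : X × R → S)
    (Sim : Y → PMF S)
    (hpriv : ∀ x : X,
      PMF.map (fun r => fhat (x, r)) (PMF.uniformOfFintype R) = Sim (f x))
    (huniq : ∀ x : X, Function.Injective (fun r => fhat (x, r))) :
    ∀ x₁ x₂ : X, f x₁ = f x₂ →
      ∀ r₁ : R, ∃! r₂ : R, fhat (x₁, r₁) = fhat (x₂, r₂) := by
  intro x₁ x₂ hf r₁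
  have h : PMF.map (fun r => fhat (x₁, r)) (PMF.uniformOfFintype R)
      = PMF.map (fun r => fhat (x₂, r)) (PMF.uniformOfFintype R) := by
    rw [hpriv, hpriv, hf]
  have hs : fhat (x₁, r₁) ∈ (PMF.map (fun r => fhat (x₂, r)) (PMF.uniformOfFintype R)).support := by
    rw [← h, PMF.support_map]
    exact ⟨r₁, by simp, rfl⟩
  rw [PMF.support_map] at hs
  obtain ⟨r₂, -, hr₂⟩ := hs
  exact ⟨r₂, hr₂.symm, fun y hy => huniq x₂ (hy.symm.trans hr₂.symm)⟩
end

section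
/- Preservation of the injective-pair (2-to-1) property (part of Theorem 3.1): Suppose f̂ satisfies decoder correctness, perfect privacy, and unique randomness. If every y in the range of f has exactly two preimages under f, then every s in the range of f̂ has exactly two preimages under f̂, i.e. the set {(x, r) : f̂(x, r) = s} has exactly two elements. -/
/-- Preservation of the injective-pair (2-to-1) property (part of Theorem 3.1):
if `f̂` satisfies decoder correctness, perfect privacy and unique randomness,
and every image point of `f` has exactly two preimages, then every image point
of `f̂` has exactly two preimages. -/
theorem injective_pair_preservation
    {X R Y S : Type*} [Fintype X] [Fintype R] [Fintype Y] [Fintype S]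
    [Nonempty X] [Nonempty R] [Nonempty Y] [Nonempty S]
    (f : X → Y) (fhat : X × R → S)
    (Dec : S → Y)
    (hdec : ∀ (x : X) (r : R), Dec (fhat (x, r)) = f x)
    (Sim : Y → PMF S)
    (hpriv : ∀ x : X,
      PMF.map (fun r => fhat (x, r)) (PMF.uniformOfFintype R) = Sim (f x))
    (huniq : ∀ x : X, Function.Injective (fun r => fhat (x, r)))
    (htwo : ∀ y ∈ Set.range f, {x : X | f x = y}.ncard = 2) :
    ∀ s ∈ Set.range fhat, {p : X × R | fhat p = s}.ncard = 2 := by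
  rintro s ⟨⟨x0, r0⟩, rfl⟩
  have hex : ∀ x : X, f x = f x0 → ∃ r, fhat (x, r) = fhat (x0, r0) := by
    intro x hx
    have h1 : PMF.map (fun r => fhat (x, r)) (PMF.uniformOfFintype R)
        = PMF.map (fun r => fhat (x0, r)) (PMF.uniformOfFintype R) := by
      rw [hpriv x, hpriv x0, hx]
    have h2 : fhat (x0, r0) ∈
        (PMF.map (fun r => fhat (x, r)) (PMF.uniformOfFintype R)).support := by
      rw [h1, PMF.support_map]
      exact ⟨r0, by simp, rfl⟩
    rw [PMF.support_map] at h2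
    obtain ⟨r, _, hr⟩ := h2
    exact ⟨r, hr⟩
  have himg : Prod.fst '' {p : X × R | fhat p = fhat (x0, r0)}
      = {x : X | f x = f x0} := by
    ext x
    constructor
    · rintro ⟨⟨x', r⟩, hp, rfl⟩
      simp only [Set.mem_setOf_eq] at hp ⊢
      rw [← hdec x' r, hp, hdec]
    · intro hx
      obtain ⟨r, hr⟩ := hex x hx
      exact ⟨(x, r), hr, rfl⟩
  have hinj : Set.InjOn Prod.fst {p : X × R | fhat p = fhat (x0, r0)} := by
    rintro ⟨x, r⟩ hp ⟨x', r'⟩ hp' h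
    simp only at h
    subst h
    have hrr : r = r' := huniq x (hp.trans hp'.symm)
    rw [hrr]
  have hcard := Set.ncard_image_of_injOn hinj
  rw [himg] at hcard
  rw [← hcard]
  exact htwo (f x0) ⟨x0, rfl⟩
end

section
/- Composition of perfect randomized encodings (Lemma B.4): Let f : X → Y, let f̂₁ : X × R₁ → S₁ have decoder Dec₁ and simulator Sim₁ (i.e. Dec₁(f̂₁(x, r₁)) = f(x) for all x, r₁, and for every x the pushforward under r₁ ↦ f̂₁(x, r₁) of the uniform distribution on R₁ equals Sim₁(f(x))), and let f̂₂ : (X × R₁) × R₂ → S₂ have decoder Dec₂ and simulator Sim₂ as a randomized encoding of f̂₁ (i.e. Dec₂(f̂₂((x, r₁), r₂)) = f̂₁(x, r₁) for all x, r₁, r₂, and for every (x, r₁) the pushforward under r₂ ↦ f̂₂((x, r₁), r₂) of the uniform distribution on R₂ equals Sim₂(f̂₁(x, r₁))). Define ĝ : X × (R₁ × R₂) → S₂ by ĝ(x, (r₁, r₂)) = f̂₂((x, r₁), r₂). Then ĝ is a perfect randomized encoding of f: (i) Dec₁ ∘ Dec₂ is a decoder for ĝ, i.e. Dec₁(Dec₂(ĝ(x,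 (r₁, r₂)))) = f(x) for all x, r₁, r₂; and (ii) the map y ↦ (Sim₁ y).bind Sim₂ is a simulator for ĝ, i.e. for every x ∈ X, the pushforward under (r₁, r₂) ↦ ĝ(x, (r₁, r₂)) of the uniform distribution on R₁ × R₂ equals (Sim₁(f(x))).bind Sim₂. -/
lemma unif_prod {α β : Type*} [Fintype α] [Fintype β] [Nonempty α] [Nonempty β] :
    PMF.uniformOfFintype (α × β)
      = (PMF.uniformOfFintype α).bind
          (fun a => (PMF.uniformOfFintype β).map (fun b => (a, b))) := by
  ext ⟨a, b⟩
  simp only [PMF.bind_apply, PMF.map_apply, PMF.uniformOfFintype_apply]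
  rw [tsum_eq_single a]
  · rw [tsum_eq_single b]
    · simp only [Prod.mk.injEq, true_and, if_pos rfl, mul_one, Fintype.card_prod,
        Nat.cast_mul]
      rw [ENNReal.mul_inv] <;> simp [mul_comm]
    · intro b' hb'; simp [Prod.ext_iff, Ne.symm hb']
  · intro a' ha'
    simp [Prod.mk.injEq, Ne.symm ha']

/-- Composition of perfect randomized encodings (Lemma B.4): if `f̂₁` is a
perfect randomized encoding of `f` (with decoder `Dec₁` and simulator `Sim₁`)
and `f̂₂` is a perfect randomized encoding of `f̂₁` (with decoder `Dec₂` and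
simulator `Sim₂`), then `ĝ (x, (r₁, r₂)) = f̂₂ ((x, r₁), r₂)` is a perfect
randomized encoding of `f`, with decoder `Dec₁ ∘ Dec₂` and simulator
`fun y => (Sim₁ y).bind Sim₂`. -/
theorem composition_of_perfect_randomized_encodings
    {X R₁ R₂ Y S₁ S₂ : Type*}
    [Fintype X] [Fintype R₁] [Fintype R₂] [Fintype Y] [Fintype S₁] [Fintype S₂]
    [Nonempty X] [Nonempty R₁] [Nonempty R₂] [Nonempty Y] [Nonempty S₁]
    [Nonempty S₂]
    (f : X → Y) (fhat₁ : X × R₁ → S₁) (fhat₂ : (X × R₁) × R₂ → S₂)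
    (Dec₁ : S₁ → Y) (Sim₁ : Y → PMF S₁)
    (Dec₂ : S₂ → S₁) (Sim₂ : S₁ → PMF S₂)
    (hdec₁ : ∀ (x : X) (r₁ : R₁), Dec₁ (fhat₁ (x, r₁)) = f x)
    (hpriv₁ : ∀ x : X,
      PMF.map (fun r₁ => fhat₁ (x, r₁)) (PMF.uniformOfFintype R₁) = Sim₁ (f x))
    (hdec₂ : ∀ (x : X) (r₁ : R₁) (r₂ : R₂),
      Dec₂ (fhat₂ ((x, r₁), r₂)) = fhat₁ (x, r₁))
    (hpriv₂ : ∀ (x : X) (r₁ : R₁),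
      PMF.map (fun r₂ => fhat₂ ((x, r₁), r₂)) (PMF.uniformOfFintype R₂)
        = Sim₂ (fhat₁ (x, r₁))) :
    (∀ (x : X) (r₁ : R₁) (r₂ : R₂),
        Dec₁ (Dec₂ (fhat₂ ((x, r₁), r₂))) = f x) ∧
    (∀ x : X,
        PMF.map (fun rr : R₁ × R₂ => fhat₂ ((x, rr.1), rr.2))
            (PMF.uniformOfFintype (R₁ × R₂))
          = (Sim₁ (f x)).bind Sim₂) := by
  refine ⟨fun x r₁ r₂ => by rw [hdec₂, hdec₁], fun x => ?_⟩
  rw [unif_prod, ← hpriv₁ x, PMF.bind_map]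
  simp only [PMF.map_bind, PMF.map_comp, Function.comp_def]
  exact congrArg _ (funext fun r₁ => hpriv₂ x r₁)
end

section
/- Branching-program determinant formula mod 2 (Lemma 2.9): Let l ≥ 2 and let A be an l × l matrix over ZMod 2 that is strictly upper triangular, i.e. A i j = 0 whenever j ≤ i. Let B be the (l−1) × (l−1) matrix over ZMod 2 obtained from A + 1 (i.e. A − I over ZMod 2) by deleting its first column and last row, namely B i j = (A + 1) i.castSucc j.succ for i, j : Fin (l−1). Then the (0, l−1) entry of the matrix ∑_{k=0}^{l−1} A^k (which counts modulo 2 the number of directed paths from the source vertex 0 to the sink vertex l−1 of the mod-2 branching program with adjacency matrix A) equals det B. -/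
private lemma pow_entry_zero (n : ℕ) (A : Matrix (Fin (n + 2)) (Fin (n + 2)) (ZMod 2))
    (hA : ∀ i j : Fin (n + 2), j ≤ i → A i j = 0) :
    ∀ (k : ℕ) (i j : Fin (n + 2)), (j : ℕ) < (i : ℕ) + k → (A ^ k) i j = 0 := by
  intro k
  induction k with
  | zero =>
    intro i j h
    simp only [pow_zero]
    exact Matrix.one_apply_ne (by rintro rfl; omega)
  | succ k ih =>
    intro i j h
    rw [pow_succ', Matrix.mul_apply]
    apply Finset.sum_eq_zero
    intro m _
    rcases le_or_gt m i with hm | hm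
    · rw [hA i m hm, zero_mul]
    · rw [ih m j (by omega), mul_zero]

/-- Branching-program determinant formula mod 2 (Lemma 2.9): for a strictly
upper triangular adjacency matrix `A` of size `l = n + 2 ≥ 2` over `ZMod 2`,
the number of paths (mod 2) from vertex `0` to vertex `l - 1`, which is the
`(0, l-1)` entry of `∑ k < l, A ^ k`, equals the determinant of the
`(l-1) × (l-1)` matrix `B` obtained from `A + 1` (i.e. `A - I` over `ZMod 2`)
by deleting its first column and last row. -/
theorem branching_program_det_formula (n : ℕ)
    (A : Matrix (Fin (n + 2)) (Fin (n + 2)) (ZMod 2))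
    (hA : ∀ i j : Fin (n + 2), j ≤ i → A i j = 0)
    (B : Matrix (Fin (n + 1)) (Fin (n + 1)) (ZMod 2))
    (hB : ∀ i j : Fin (n + 1), B i j = (A + 1) i.castSucc j.succ) :
    (∑ k ∈ Finset.range (n + 2), A ^ k) 0 (Fin.last (n + 1)) = B.det := by
  set S : Matrix (Fin (n + 2)) (Fin (n + 2)) (ZMod 2) := ∑ k ∈ Finset.range (n + 2), A ^ k
    with hS
  set M : Matrix (Fin (n + 2)) (Fin (n + 2)) (ZMod 2) := A + 1 with hM
  -- nilpotency
  have hnil : A ^ (n + 2) = 0 := by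
    ext i j
    rw [Matrix.zero_apply]
    exact pow_entry_zero n A hA (n + 2) i j (by omega)
  -- characteristic 2: -1 = 1 in the matrix ring
  have hneg : (-1 : Matrix (Fin (n + 2)) (Fin (n + 2)) (ZMod 2)) = 1 := by
    ext i j
    simp only [Matrix.neg_apply]
    exact CharTwo.neg_eq _
  -- geometric series: S * M = 1
  have hSM : S * M = 1 := by
    have h1 : S * (A - 1) = A ^ (n + 2) - 1 := geom_sum_mul A (n + 2)
    have h2 : A - 1 = M := by rw [hM, sub_eq_add_neg, hneg]
    rw [h2, hnil, zero_sub, hneg] at h1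
    exact h1
  have hMinv : M⁻¹ = S := Matrix.inv_eq_left_inv hSM
  -- det M = 1
  have hdet : M.det = 1 := by
    have hbt : M.BlockTriangular id := by
      intro i j hij
      simp only [id] at hij
      have : j < i := hij
      simp [hM, hA i j this.le, Matrix.one_apply_ne this.ne']
    rw [Matrix.det_of_upperTriangular hbt]
    have : ∀ i, M i i = 1 := by
      intro i
      simp [hM, hA i i le_rfl]
    simp [this]
  -- S = adjugate M
  have hSadj : S = M.adjugate := by
    rw [← hMinv, Matrix.inv_def, hdet, Ring.inverse_one, one_smul]
  rw [hSadj]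
  have := Matrix.adjugate_fin_succ_eq_det_submatrix M 0 (Fin.last (n + 1))
  rw [this, Fin.succAbove_last, Fin.succAbove_zero]
  have hB' : B = M.submatrix Fin.castSucc Fin.succ := by
    ext i j
    rw [hB i j, Matrix.submatrix_apply]
  rw [hB']
  have : ((-1 : ZMod 2) ^ ((Fin.last (n + 1) : ℕ) + ((0 : Fin (n+2)) : ℕ))) = 1 := by
    rw [CharTwo.neg_eq, one_pow]
  rw [this, one_mul]
end

section
/- Randomness reconstruction / injectivity of the garbling map (Lemma 2.7, proved in Appendix B): Let n ≥ 1 and let L be an n × n matrix over ZMod 2 of branching-program form (L (i+1) i = 1 for all i with i+1 < n, and L i j = 0 whenever i > j + 1). Suppose R¹ and R̃¹ are upper unitriangular n × n matrices over ZMod 2, and R² and R̃² are n × n matrices over ZMod 2 of last-column form. If R¹ * L * R² = R̃¹ * L * R̃², then R¹ = R̃¹ and R² = R̃². In particular, for fixed L the map (R¹, R²) ↦ R¹ * L * R² is injective, so the randomness of the encoding can be uniquely reconstructed from the input and the encoded value. -/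
private lemma zmod2_add_self (a : ZMod 2) : a + a = 0 := by revert a; decide

private lemma lastcol_diag_one {n : ℕ} (P Q : Matrix (Fin n) (Fin n) (ZMod 2))
    (hPoff : ∀ i j : Fin n, i ≠ j → ¬((j : ℕ) = n - 1 ∧ (i : ℕ) < n - 1) → P i j = 0)
    (hPdiag : ∀ i, P i i = 1)
    (hQoff : ∀ i j : Fin n, i ≠ j → ¬((j : ℕ) = n - 1 ∧ (i : ℕ) < n - 1) → Q i j = 0)
    (hQdiag : ∀ i, Q i i = 1)
    (i : Fin n) : (P * Q) i i = 1 := by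
  rw [Matrix.mul_apply, Finset.sum_eq_single i]
  · rw [hPdiag, hQdiag, one_mul]
  · intro k _ hk
    by_cases h1 : P i k = 0
    · rw [h1, zero_mul]
    · have hk' : (k : ℕ) = n - 1 ∧ (i : ℕ) < n - 1 := by
        by_contra hc
        exact h1 (hPoff i k (Ne.symm hk) hc)
      have hQ : Q k i = 0 := hQoff k i hk (by omega)
      rw [hQ, mul_zero]
  · intro h; exact absurd (Finset.mem_univ i) h

private lemma lastcol_off {n : ℕ} (P Q : Matrix (Fin n) (Fin n) (ZMod 2))
    (hPoff : ∀ i j : Fin n, i ≠ j → ¬((j : ℕ) = n - 1 ∧ (i : ℕ) < n - 1) → P i j = 0)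
    (hQoff : ∀ i j : Fin n, i ≠ j → ¬((j : ℕ) = n - 1 ∧ (i : ℕ) < n - 1) → Q i j = 0)
    (i j : Fin n) (hij : i ≠ j)
    (hcond : ¬((j : ℕ) = n - 1 ∧ (i : ℕ) < n - 1)) : (P * Q) i j = 0 := by
  rw [Matrix.mul_apply]
  apply Finset.sum_eq_zero
  intro k _
  by_cases hki : k = i
  · subst hki; rw [hQoff k j hij hcond, mul_zero]
  · by_cases h1 : P i k = 0
    · rw [h1, zero_mul]
    · have hk' : (k : ℕ) = n - 1 ∧ (i : ℕ) < n - 1 := by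
        by_contra hc; exact h1 (hPoff i k (fun h => hki h.symm) hc)
      have hkj : k ≠ j := by
        intro h; subst h; exact hcond ⟨hk'.1, hk'.2⟩
      rw [hQoff k j hkj (by omega), mul_zero]

private lemma lastcol_invol {n : ℕ} (R : Matrix (Fin n) (Fin n) (ZMod 2))
    (hdiag : ∀ i, R i i = 1)
    (hoff : ∀ i j : Fin n, i ≠ j → ¬((j : ℕ) = n - 1 ∧ (i : ℕ) < n - 1) → R i j = 0) :
    R * R = 1 := by
  ext i j
  by_cases hij : i = j
  · subst hij
    rw [lastcol_diag_one R R hoff hdiag hoff hdiag, Matrix.one_apply_eq]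
  · rw [Matrix.one_apply_ne hij]
    by_cases hcond : (j : ℕ) = n - 1 ∧ (i : ℕ) < n - 1
    · rw [Matrix.mul_apply,
        Finset.sum_eq_add_of_mem i j (Finset.mem_univ i) (Finset.mem_univ j) hij ?_]
      · rw [hdiag, hdiag, one_mul, mul_one, zmod2_add_self]
      · rintro c _ ⟨hci, hcj⟩
        by_cases h1 : R i c = 0
        · rw [h1, zero_mul]
        · have hc' : (c : ℕ) = n - 1 ∧ (i : ℕ) < n - 1 := by
            by_contra hc2
            exact h1 (hoff i c (fun h => hci h.symm) hc2)
          exact absurd (Fin.ext (by omega) : c = j) hcj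
    · rw [lastcol_off R R hoff hoff i j hij hcond]

private lemma strict_upper_cancel {n : ℕ} (L N : Matrix (Fin n) (Fin n) (ZMod 2))
    (hLsub : ∀ i : Fin n, ∀ h : (i : ℕ) + 1 < n, L ⟨(i : ℕ) + 1, h⟩ i = 1)
    (hLlow : ∀ i j : Fin n, (j : ℕ) + 1 < (i : ℕ) → L i j = 0)
    (hN : ∀ i j : Fin n, (j : ℕ) ≤ (i : ℕ) → N i j = 0)
    (h : ∀ i j : Fin n, (j : ℕ) ≠ n - 1 → (N * L) i j = 0) :
    N = 0 := by
  have key : ∀ m : ℕ, ∀ j : Fin n, (j : ℕ) ≤ m → ∀ i, N i j = 0 := by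
    intro m
    induction m with
    | zero => intro j hj i; exact hN i j (by omega)
    | succ m ih =>
      intro j hj i
      by_cases hle : (j : ℕ) ≤ (i : ℕ)
      · exact hN i j hle
      · have hjlt : (j : ℕ) < n := j.isLt
        have hilt : (i : ℕ) < n := i.isLt
        have hm' : (j : ℕ) - 1 < n := by omega
        have h0 := h i ⟨(j : ℕ) - 1, hm'⟩ (by simp; omega)
        rw [Matrix.mul_apply, Finset.sum_eq_single j] at h0
        · have h2 : ((⟨(j : ℕ) - 1, hm'⟩ : Fin n) : ℕ) + 1 < n := by simp; omega
          have hsub := hLsub ⟨(j : ℕ) - 1, hm'⟩ h2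
          have hjj : (⟨((⟨(j : ℕ) - 1, hm'⟩ : Fin n) : ℕ) + 1, h2⟩ : Fin n) = j := by
            apply Fin.ext; simp; omega
          rw [hjj] at hsub
          rw [hsub, mul_one] at h0
          exact h0
        · intro k _ hkj
          have hkj' : (k : ℕ) ≠ (j : ℕ) := fun hh => hkj (Fin.ext hh)
          by_cases hk : (k : ℕ) ≤ m
          · rw [ih k hk i, zero_mul]
          · rw [hLlow k ⟨(j : ℕ) - 1, hm'⟩ (by simp; omega), mul_zero]
        · intro hm2; exact absurd (Finset.mem_univ j) hm2
  ext i j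
  simp only [Matrix.zero_apply]
  exact key n j (by omega) i

private lemma unitriangular_cancel {n : ℕ} (R D : Matrix (Fin n) (Fin n) (ZMod 2))
    (hdiag : ∀ i, R i i = 1)
    (hlow : ∀ i j : Fin n, j < i → R i j = 0)
    (h : R * D = 0) : D = 0 := by
  have key : ∀ m : ℕ, ∀ i : Fin n, n ≤ (i : ℕ) + m → ∀ j, D i j = 0 := by
    intro m
    induction m with
    | zero => intro i hi; exact absurd i.isLt (by omega)
    | succ m ih =>
      intro i hi j
      have h0 : (R * D) i j = 0 := by rw [h]; simp
      rw [Matrix.mul_apply, Finset.sum_eq_single i] at h0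
      · rw [hdiag, one_mul] at h0; exact h0
      · intro k _ hk
        have hk' : (k : ℕ) ≠ (i : ℕ) := fun hh => hk (Fin.ext hh)
        by_cases hki : (k : ℕ) < (i : ℕ)
        · rw [hlow i k (Fin.lt_def.mpr hki), zero_mul]
        · rw [ih k (by omega) j, mul_zero]
      · intro hm; exact absurd (Finset.mem_univ i) hm
  ext i j
  simp only [Matrix.zero_apply]
  exact key n i (by omega) j

private lemma column_cancel {n : ℕ} (hn : 1 ≤ n) (L : Matrix (Fin n) (Fin n) (ZMod 2))
    (hLsub : ∀ i : Fin n, ∀ h : (i : ℕ) + 1 < n, L ⟨(i : ℕ) + 1, h⟩ i = 1)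
    (hLlow : ∀ i j : Fin n, (j : ℕ) + 1 < (i : ℕ) → L i j = 0)
    (u : Fin n → ZMod 2)
    (hlast : u ⟨n - 1, by omega⟩ = 0)
    (h : ∀ i : Fin n, ∑ k, L i k * u k = 0) :
    ∀ k, u k = 0 := by
  have key : ∀ m : ℕ, ∀ k : Fin n, n ≤ (k : ℕ) + m + 1 → u k = 0 := by
    intro m
    induction m with
    | zero =>
      intro k hk
      have hk2 : k = ⟨n - 1, by omega⟩ := Fin.ext (by have := k.isLt; simp; omega)
      rw [hk2]; exact hlast
    | succ m ih =>
      intro k hk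
      by_cases hkl : (k : ℕ) = n - 1
      · have hk2 : k = ⟨n - 1, by omega⟩ := Fin.ext (by simp; omega)
        rw [hk2]; exact hlast
      · have hk1 : (k : ℕ) + 1 < n := by have := k.isLt; omega
        have h0 := h ⟨(k : ℕ) + 1, hk1⟩
        rw [Finset.sum_eq_single k] at h0
        · rw [hLsub k hk1, one_mul] at h0; exact h0
        · intro t _ htk
          have htk' : (t : ℕ) ≠ (k : ℕ) := fun hh => htk (Fin.ext hh)
          by_cases hlt : (t : ℕ) + 1 < (k : ℕ) + 1
          · rw [hLlow ⟨(k : ℕ) + 1, hk1⟩ t (by simpa using hlt), zero_mul]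
          · rw [ih t (by omega), mul_zero]
        · intro hm; exact absurd (Finset.mem_univ k) hm
  intro k
  exact key n k (by omega)

/-- Randomness reconstruction / injectivity of the garbling map (Lemma 2.7,
Appendix B): for a fixed `n × n` matrix `L` over `ZMod 2` of branching-program
form, if `R¹ * L * R² = R̃¹ * L * R̃²` with `R¹, R̃¹` upper unitriangular and
`R², R̃²` of last-column form, then `R¹ = R̃¹` and `R² = R̃²`. -/
theorem randomness_reconstruction
    (n : ℕ) (hn : 1 ≤ n)
    (L R₁ R₂ R₁' R₂' : Matrix (Fin n) (Fin n) (ZMod 2))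
    (hLsub : ∀ i : Fin n, ∀ h : (i : ℕ) + 1 < n, L ⟨(i : ℕ) + 1, h⟩ i = 1)
    (hLlow : ∀ i j : Fin n, (j : ℕ) + 1 < (i : ℕ) → L i j = 0)
    (hR₁diag : ∀ i : Fin n, R₁ i i = 1)
    (hR₁low : ∀ i j : Fin n, j < i → R₁ i j = 0)
    (hR₁'diag : ∀ i : Fin n, R₁' i i = 1)
    (hR₁'low : ∀ i j : Fin n, j < i → R₁' i j = 0)
    (hR₂diag : ∀ i : Fin n, R₂ i i = 1)
    (hR₂off : ∀ i j : Fin n, i ≠ j →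
      ¬((j : ℕ) = n - 1 ∧ (i : ℕ) < n - 1) → R₂ i j = 0)
    (hR₂'diag : ∀ i : Fin n, R₂' i i = 1)
    (hR₂'off : ∀ i j : Fin n, i ≠ j →
      ¬((j : ℕ) = n - 1 ∧ (i : ℕ) < n - 1) → R₂' i j = 0)
    (heq : R₁ * L * R₂ = R₁' * L * R₂') :
    R₁ = R₁' ∧ R₂ = R₂' := by
  have hRR : R₂ * R₂ = 1 := lastcol_invol R₂ hR₂diag hR₂off
  set C := R₂' * R₂ with hCdef
  have hCdiag : ∀ i, C i i = 1 :=
    lastcol_diag_one R₂' R₂ hR₂'off hR₂'diag hR₂off hR₂diag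
  have hCoff : ∀ i j : Fin n, i ≠ j →
      ¬((j : ℕ) = n - 1 ∧ (i : ℕ) < n - 1) → C i j = 0 :=
    lastcol_off R₂' R₂ hR₂'off hR₂off
  have heq2 : R₁ * L = R₁' * L * C := by
    rw [hCdef, ← mul_assoc, ← heq, mul_assoc, mul_assoc, hRR, mul_one]
  have hN : R₁ - R₁' = 0 := by
    apply strict_upper_cancel L (R₁ - R₁') hLsub hLlow
    · intro i j hle
      simp only [Matrix.sub_apply]
      rcases Nat.lt_or_ge (j : ℕ) (i : ℕ) with hlt | hge
      · rw [hR₁low i j (Fin.lt_def.mpr hlt), hR₁'low i j (Fin.lt_def.mpr hlt), sub_zero]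
      · have hji : j = i := Fin.ext (by omega)
        subst hji
        rw [hR₁diag, hR₁'diag, sub_self]
    · intro i j hj
      have e1 : (R₁ - R₁') * L = R₁' * L * C - R₁' * L := by
        rw [Matrix.sub_mul, heq2]
      rw [e1]
      simp only [Matrix.sub_apply]
      have e2 : (R₁' * L * C) i j = (R₁' * L) i j := by
        rw [Matrix.mul_apply, Finset.sum_eq_single j]
        · rw [hCdiag, mul_one]
        · intro m _ hmj
          rw [hCoff m j hmj (by simp [hj]), mul_zero]
        · intro hm; exact absurd (Finset.mem_univ j) hm
      rw [e2, sub_self]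
  have hR1 : R₁ = R₁' := sub_eq_zero.mp hN
  have hLC : L * C = L := by
    have h0 : R₁' * (L * C - L) = 0 := by
      rw [Matrix.mul_sub, ← mul_assoc, ← heq2, hR1, sub_self]
    have := unitriangular_cancel R₁' (L * C - L) hR₁'diag hR₁'low h0
    exact sub_eq_zero.mp this
  have hC1 : C = 1 := by
    ext k j
    have hcol := column_cancel hn L hLsub hLlow
      (fun m => C m j - (1 : Matrix (Fin n) (Fin n) (ZMod 2)) m j) ?_ ?_
    · have := hcol k
      simpa [sub_eq_zero] using this
    · by_cases hj : j = ⟨n - 1, by omega⟩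
      · subst hj
        simp [hCdiag]
      · have hj' : (j : ℕ) ≠ n - 1 := fun hh => hj (Fin.ext hh)
        have h1 : C ⟨n - 1, by omega⟩ j = 0 :=
          hCoff _ j (fun hh => hj hh.symm) (by omega)
        simp [h1, Matrix.one_apply_ne (fun hh => hj hh.symm)]
    · intro i
      have e3 : ∑ m, L i m * (C m j - (1 : Matrix (Fin n) (Fin n) (ZMod 2)) m j)
          = (L * C) i j - (L * (1 : Matrix (Fin n) (Fin n) (ZMod 2))) i j := by
        rw [Matrix.mul_apply, Matrix.mul_apply, ← Finset.sum_sub_distrib]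
        apply Finset.sum_congr rfl
        intro m _
        rw [mul_sub]
      rw [e3, hLC, mul_one, sub_self]
  have hR2 : R₂ = R₂' := by
    have hC1' : R₂' * R₂ = 1 := hC1
    calc R₂ = 1 * R₂ := (one_mul _).symm
      _ = (R₂' * R₂) * R₂ := by rw [hC1']
      _ = R₂' * (R₂ * R₂) := by rw [mul_assoc]
      _ = R₂' := by rw [hRR, mul_one]
  exact ⟨hR1, hR2⟩
end

section
/- Main-diagonal entry formula for the garbled matrix (intermediate claim in Appendix B): Let n ≥ 2, let L be an n × n matrix over ZMod 2 of branching-program form, R¹ upper unitriangular, R² of last-column form, and set M = R¹ * L * R². Then for every index i with i < n−1, M i i = L i i + R¹ i (i+1). -/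
/-- Main-diagonal entry formula for the garbled matrix (Appendix B): with
`M = R¹ * L * R²` (over `ZMod 2`, `n ≥ 2`, `L` of branching-program form,
`R¹` upper unitriangular, `R²` of last-column form), for every `i < n - 1`
one has `M i i = L i i + R¹ i (i+1)`. -/
theorem garbled_matrix_main_diagonal
    (n : ℕ) (hn : 2 ≤ n)
    (L R₁ R₂ : Matrix (Fin n) (Fin n) (ZMod 2))
    (hLsub : ∀ i : Fin n, ∀ h : (i : ℕ) + 1 < n, L ⟨(i : ℕ) + 1, h⟩ i = 1)
    (hLlow : ∀ i j : Fin n, (j : ℕ) + 1 < (i : ℕ) → L i j = 0)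
    (hR₁diag : ∀ i : Fin n, R₁ i i = 1)
    (hR₁low : ∀ i j : Fin n, j < i → R₁ i j = 0)
    (hR₂diag : ∀ i : Fin n, R₂ i i = 1)
    (hR₂off : ∀ i j : Fin n, i ≠ j →
      ¬((j : ℕ) = n - 1 ∧ (i : ℕ) < n - 1) → R₂ i j = 0) :
    ∀ i : Fin n, ∀ h : (i : ℕ) + 1 < n,
      (R₁ * L * R₂) i i = L i i + R₁ i ⟨(i : ℕ) + 1, h⟩ := by
  intro i h
  set j : Fin n := ⟨(i : ℕ) + 1, h⟩ with hj
  have hij : i ≠ j := by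
    intro he
    have : (i : ℕ) = (i : ℕ) + 1 := congrArg Fin.val he
    omega
  rw [Matrix.mul_apply]
  rw [Finset.sum_eq_single i]
  · rw [hR₂diag, mul_one, Matrix.mul_apply]
    have hvan : ∀ k ∈ (Finset.univ : Finset (Fin n)), k ∉ ({i, j} : Finset (Fin n)) →
        R₁ i k * L k i = 0 := by
      intro k _ hk
      simp only [Finset.mem_insert, Finset.mem_singleton] at hk
      push_neg at hk
      obtain ⟨hki, hkj⟩ := hk
      have hki' : (k : ℕ) ≠ (i : ℕ) := fun e => hki (Fin.ext e)
      have hkj' : (k : ℕ) ≠ (i : ℕ) + 1 := fun e => hkj (Fin.ext e)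
      rcases lt_or_gt_of_ne hki' with hlt | hgt
      · rw [hR₁low i k hlt, zero_mul]
      · have : (i : ℕ) + 1 < (k : ℕ) := by omega
        rw [hLlow k i this, mul_zero]
    rw [← Finset.sum_subset (Finset.subset_univ {i, j}) hvan,
      Finset.sum_pair hij, hR₁diag, one_mul]
    have : L j i = 1 := hLsub i h
    rw [this, mul_one]
  · intro m _ hmi
    have : R₂ m i = 0 := by
      refine hR₂off m i hmi ?_
      rintro ⟨hcol, -⟩
      omega
    rw [this, mul_zero]
  · intro hf
    exact absurd (Finset.mem_univ i) hf
end

section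
/- Last-diagonal entry formula for the garbled matrix (intermediate claim in Appendix B): Let n ≥ 2, let L be an n × n matrix over ZMod 2 of branching-program form, R¹ upper unitriangular, R² of last-column form, and set M = R¹ * L * R². Then M (n−1) (n−1) = L (n−1) (n−1) + R² (n−2) (n−1). -/
/-- Last-diagonal entry formula for the garbled matrix (Appendix B): with
`M = R¹ * L * R²` (over `ZMod 2`, `n ≥ 2`, `L` of branching-program form,
`R¹` upper unitriangular, `R²` of last-column form),
`M (n-1) (n-1) = L (n-1) (n-1) + R² (n-2) (n-1)`. -/
theorem garbled_matrix_last_diagonal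
    (n : ℕ) (hn : 2 ≤ n)
    (L R₁ R₂ : Matrix (Fin n) (Fin n) (ZMod 2))
    (hLsub : ∀ i : Fin n, ∀ h : (i : ℕ) + 1 < n, L ⟨(i : ℕ) + 1, h⟩ i = 1)
    (hLlow : ∀ i j : Fin n, (j : ℕ) + 1 < (i : ℕ) → L i j = 0)
    (hR₁diag : ∀ i : Fin n, R₁ i i = 1)
    (hR₁low : ∀ i j : Fin n, j < i → R₁ i j = 0)
    (hR₂diag : ∀ i : Fin n, R₂ i i = 1)
    (hR₂off : ∀ i j : Fin n, i ≠ j →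
      ¬((j : ℕ) = n - 1 ∧ (i : ℕ) < n - 1) → R₂ i j = 0) :
    (R₁ * L * R₂) ⟨n - 1, by omega⟩ ⟨n - 1, by omega⟩
      = L ⟨n - 1, by omega⟩ ⟨n - 1, by omega⟩
        + R₂ ⟨n - 2, by omega⟩ ⟨n - 1, by omega⟩ := by
  set a : Fin n := ⟨n - 1, by omega⟩ with ha
  set b : Fin n := ⟨n - 2, by omega⟩ with hb
  have hba : b ≠ a := by
    simp only [ha, hb, ne_eq, Fin.mk.injEq]
    omega
  rw [mul_assoc, Matrix.mul_apply]
  rw [Finset.sum_eq_single a]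
  · rw [hR₁diag, one_mul, Matrix.mul_apply]
    have hsub : ({b, a} : Finset (Fin n)) ⊆ Finset.univ := Finset.subset_univ _
    rw [← Finset.sum_subset hsub]
    · rw [Finset.sum_pair hba]
      have h1 : L a b = 1 := by
        have := hLsub b (by simp [hb]; omega)
        convert this using 2
        simp [ha, hb, Fin.ext_iff]
        omega
      rw [h1, one_mul, hR₂diag, mul_one, add_comm]
    · intro k _ hk
      simp only [Finset.mem_insert, Finset.mem_singleton] at hk
      push_neg at hk
      by_cases hka : (k : ℕ) < n - 1
      · have : L a k = 0 := by
          apply hLlow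
          have : (k : ℕ) ≠ n - 2 := fun h => hk.1 (by simp [hb, Fin.ext_iff, h])
          simp [ha]; omega
        rw [this, zero_mul]
      · exfalso
        exact hk.2 (by simp [ha, Fin.ext_iff]; omega)
  · intro j _ hj
    have : R₁ a j = 0 := by
      apply hR₁low
      have hj' : (j : ℕ) ≠ n - 1 := fun h => hj (by simp [ha, Fin.ext_iff, h])
      have := j.isLt
      simp [ha, Fin.lt_def]; omega
    rw [this, zero_mul]
  · intro h; exact absurd (Finset.mem_univ a) h
end

section
/- Off-diagonal entry formula for the garbled matrix (intermediate claim in Appendix B): Let n ≥ 2, let L be an n × n matrix over ZMod 2 of branching-program form, R¹ upper unitriangular, R² of last-column form, and set M = R¹ * L * R². Then for every i and every j ≥ 1 with i + j < n−1, M i (i+j) = R¹ i (i+j+1) + L i (i+j) + ∑_{k=i+1}^{i+j} R¹ i k * L k (i+j). -/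
/-- Off-diagonal entry formula for the garbled matrix (Appendix B): with
`M = R¹ * L * R²` (over `ZMod 2`, `n ≥ 2`, `L` of branching-program form,
`R¹` upper unitriangular, `R²` of last-column form), for every `i` and every
`j ≥ 1` with `i + j < n - 1`,
`M i (i+j) = R¹ i (i+j+1) + L i (i+j) + ∑_{k=i+1}^{i+j} R¹ i k * L k (i+j)`. -/
theorem garbled_matrix_off_diagonal
    (n : ℕ) (hn : 2 ≤ n)
    (L R₁ R₂ : Matrix (Fin n) (Fin n) (ZMod 2))
    (hLsub : ∀ i : Fin n, ∀ h : (i : ℕ) + 1 < n, L ⟨(i : ℕ) + 1, h⟩ i = 1)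
    (hLlow : ∀ i j : Fin n, (j : ℕ) + 1 < (i : ℕ) → L i j = 0)
    (hR₁diag : ∀ i : Fin n, R₁ i i = 1)
    (hR₁low : ∀ i j : Fin n, j < i → R₁ i j = 0)
    (hR₂diag : ∀ i : Fin n, R₂ i i = 1)
    (hR₂off : ∀ i j : Fin n, i ≠ j →
      ¬((j : ℕ) = n - 1 ∧ (i : ℕ) < n - 1) → R₂ i j = 0) :
    ∀ i j : ℕ, 1 ≤ j → ∀ h : i + j < n - 1,
      (R₁ * L * R₂) ⟨i, by omega⟩ ⟨i + j, by omega⟩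
        = R₁ ⟨i, by omega⟩ ⟨i + j + 1, by omega⟩
          + L ⟨i, by omega⟩ ⟨i + j, by omega⟩
          + ∑ k ∈ Finset.univ.filter
              (fun k : Fin n => i + 1 ≤ (k : ℕ) ∧ (k : ℕ) ≤ i + j),
              R₁ ⟨i, by omega⟩ k * L k ⟨i + j, by omega⟩ := by
  intro i j hj h
  have hi : i < n := by omega
  have hij : i + j < n := by omega
  have hij1 : i + j + 1 < n := by omega
  set a : Fin n := ⟨i, hi⟩ with ha
  set b : Fin n := ⟨i + j, hij⟩ with hb
  set c : Fin n := ⟨i + j + 1, hij1⟩ with hc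
  have step1 : (R₁ * L * R₂) a b = ∑ s, R₁ a s * L s b := by
    rw [Matrix.mul_apply]
    rw [Finset.sum_eq_single b]
    · rw [hR₂diag, mul_one, Matrix.mul_apply]
    · intro t _ ht
      rw [hR₂off t b ht (by simp only [hb]; omega), mul_zero]
    · simp
  rw [step1]
  have hzero : ∀ s : Fin n, s ∈ Finset.univ →
      s ∉ Finset.univ.filter (fun k : Fin n => i ≤ (k : ℕ) ∧ (k : ℕ) ≤ i + j + 1) →
      R₁ a s * L s b = 0 := by
    intro s _ hs
    simp only [Finset.mem_filter, Finset.mem_univ, true_and, not_and, not_le] at hs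
    rcases lt_or_ge (s : ℕ) i with h1 | h1
    · rw [hR₁low a s (by simpa [Fin.lt_def, ha] using h1), zero_mul]
    · rw [hLlow s b (by simp only [hb]; omega), mul_zero]
  rw [← Finset.sum_subset (Finset.subset_univ _) hzero]
  have hset : Finset.univ.filter (fun k : Fin n => i ≤ (k : ℕ) ∧ (k : ℕ) ≤ i + j + 1)
      = insert a (insert c (Finset.univ.filter
          (fun k : Fin n => i + 1 ≤ (k : ℕ) ∧ (k : ℕ) ≤ i + j))) := by
    ext k
    simp only [Finset.mem_filter, Finset.mem_univ, true_and, Finset.mem_insert,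
      Fin.ext_iff, ha, hc]
    omega
  have hna : a ∉ insert c (Finset.univ.filter
      (fun k : Fin n => i + 1 ≤ (k : ℕ) ∧ (k : ℕ) ≤ i + j)) := by
    simp only [Finset.mem_insert, Finset.mem_filter, Finset.mem_univ, true_and,
      Fin.ext_iff, ha, hc]
    omega
  have hnc : c ∉ Finset.univ.filter
      (fun k : Fin n => i + 1 ≤ (k : ℕ) ∧ (k : ℕ) ≤ i + j) := by
    simp only [Finset.mem_filter, Finset.mem_univ, true_and, hc]
    omega
  rw [hset, Finset.sum_insert hna, Finset.sum_insert hnc]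
  have hLcb : L c b = 1 := hLsub b hij1
  rw [hR₁diag, hLcb, one_mul, mul_one]
  ring
end
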